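/- arXiv:1604.05806 — 2 statements merged into one kernel-verified Lean document; each statement's English description precedes it below -/
import Mathlib

section
/- For every integer N ≥ 1, a_{1,N}(N+1,x) = −(N+1)·(x)_N. -/
open Finset

/-- Falling factorial `(x)_n = x(x-1)⋯(x-n+1)`, with `(x)_0 = 1`. -/
noncomputable def fallingFactorial (x : ℝ) (n : ℕ) : ℝ := ∏ i ∈ Finset.range n, (x - i)

/-- The coefficients `a_{i,j}(N, x)` arising from repeated differentiation of the
λ-Changhee generating function: `a_{0,0}(N,x) = 0`, `a_{1,0}(1,x) = -1`, `a_{0,1}(1,x) = x`,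
and for `N ≥ 1`, `i, j ≥ 0` with `1 ≤ i + j ≤ N + 1`,
`a_{i,j}(N+1,x) = -N·a_{i,j}(N,x) - i·a_{i-1,j}(N,x) + (x - j + 1)·a_{i,j-1}(N,x)`,
with the convention that `a_{i,j}(N,x) = 0` whenever `i < 0`, `j < 0`, or `i + j > N`. -/
noncomputable def aCh : ℕ → ℤ → ℤ → ℝ → ℝ
  | 0, _, _, _ => 0
  | 1, i, j, x => if i = 1 ∧ j = 0 then -1 else if i = 0 ∧ j = 1 then x else 0
  | (N+2), i, j, x =>
      if 0 ≤ i ∧ 0 ≤ j ∧ 1 ≤ i + j ∧ i + j ≤ N + 2 then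
        -(N+1 : ℝ) * aCh (N+1) i j x - (i : ℝ) * aCh (N+1) (i-1) j x
          + (x - (j : ℝ) + 1) * aCh (N+1) i (j-1) x
      else 0

/-!
Unfold the recursion at `(i, j) = (1, N)`: the term `a_{1,N}(N, x)` lies outside the triangle
`i + j ≤ N` and vanishes, `a_{0,N}(N, x) = (x)_N` (the same recursion along the diagonal `i = 0`),
and by induction `(x - N + 1) · a_{1,N-1}(N, x) = -N (x - N + 1) (x)_{N-1} = -N (x)_N`.
-/

theorem fallingFactorial_succ (x : ℝ) (n : ℕ) :
    fallingFactorial x (n + 1) = fallingFactorial x n * (x - n) :=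
  prod_range_succ _ n

theorem aCh_eq_zero_of_lt {N : ℕ} {i j : ℤ} (h : (N : ℤ) < i + j) (x : ℝ) :
    aCh N i j x = 0 := by
  match N with
  | 0 => rfl
  | 1 => rw [aCh, if_neg (by omega), if_neg (by omega)]
  | N + 2 => rw [aCh, if_neg (by omega)]

theorem aCh_add_two {N : ℕ} {i j : ℤ} (hi : 0 ≤ i) (hj : 0 ≤ j) (h₁ : 1 ≤ i + j)
    (h₂ : i + j ≤ N + 2) (x : ℝ) :
    aCh (N + 2) i j x = -(N + 1 : ℝ) * aCh (N + 1) i j x - (i : ℝ) * aCh (N + 1) (i - 1) j x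
      + (x - (j : ℝ) + 1) * aCh (N + 1) i (j - 1) x := by
  rw [aCh, if_pos ⟨hi, hj, h₁, h₂⟩]

theorem aCh_zero_self (n : ℕ) (x : ℝ) :
    aCh (n + 1) 0 (n + 1 : ℕ) x = fallingFactorial x (n + 1) := by
  induction n with
  | zero => simp [aCh, fallingFactorial]
  | succ n ih =>
    rw [aCh_add_two le_rfl (by omega) (by omega) (by omega), aCh_eq_zero_of_lt (by omega),
      Nat.cast_succ, add_sub_cancel_right, ih, fallingFactorial_succ x (n + 1)]
    push_cast
    ring

theorem aCh_one_N_general (N : ℕ) (x : ℝ) :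
    aCh (N + 1) 1 (N : ℤ) x = -((N : ℝ) + 1) * fallingFactorial x N := by
  induction N with
  | zero => simp [aCh, fallingFactorial]
  | succ n ih =>
    rw [aCh_add_two zero_le_one (by omega) (by omega) (by omega), aCh_eq_zero_of_lt (by omega),
      sub_self, aCh_zero_self, Nat.cast_succ, add_sub_cancel_right, ih, fallingFactorial_succ]
    push_cast
    ring

/-- `a_{1,N}(N+1,x) = -(N+1)·(x)_N` for `N ≥ 1`. -/
theorem aCh_one_N (N : ℕ) (hN : 1 ≤ N) (x : ℝ) :
    aCh (N + 1) 1 (N : ℤ) x = -((N : ℝ) + 1) * fallingFactorial x N :=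
  aCh_one_N_general N x
end

section
/- For all integers N and r with 2 ≤ r ≤ N, a_{r,0}(N+1,x) = (−1)^{N+1} · N! · r! · H_{N,r−1} (as a constant polynomial in x). -/
open Finset

/-- Generalized harmonic numbers `H_{N,j}`: `H_{N,0} = 1`,
`H_{N,1} = 1 + 1/2 + ⋯ + 1/N`, and `H_{N,j} = ∑_{l=j}^{N} H_{l-1,j-1}/l` for `j ≥ 2`. -/
def genHarmonic : ℕ → ℕ → ℚ
  | _, 0 => 1
  | N, 1 => ∑ i ∈ Finset.range N, (1 : ℚ) / (i + 1)
  | N, (j+2) => ∑ l ∈ Finset.Icc (j+2) N, genHarmonic (l-1) (j+1) / l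
termination_by N j => j

/-!
Since `a_{i,-1} = 0`, the recursion restricted to the column `j = 0` reads
`a_{r,0}(N+1) = -N·a_{r,0}(N) - r·a_{r-1,0}(N)`. The closed form satisfies the same recursion
because of the Pascal-type identity `H_{N+1,j+1} = H_{N,j+1} + H_{N,j}/(N+1)`, so induction on `N`
proves it for every `r ≥ 1` (both sides vanish once `r > N + 1`).
-/

open scoped Nat

@[simp]
lemma genHarmonic_zero (N : ℕ) : genHarmonic N 0 = 1 := by
  rw [genHarmonic]

lemma genHarmonic_eq_zero_of_lt {N j : ℕ} (hj : 1 ≤ j) (hN : N < j) : genHarmonic N j = 0 := by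
  match j, hj with
  | 1, _ =>
    obtain rfl : N = 0 := by omega
    simp [genHarmonic]
  | k + 2, _ =>
    rw [genHarmonic, Finset.Icc_eq_empty (by omega), Finset.sum_empty]

lemma genHarmonic_succ_succ (N j : ℕ) :
    genHarmonic (N + 1) (j + 1) = genHarmonic N (j + 1) + genHarmonic N j / (N + 1) := by
  rcases Nat.lt_or_ge N j with hNj | hjN
  · rw [genHarmonic_eq_zero_of_lt (by omega) (by omega), genHarmonic_eq_zero_of_lt (by omega) hNj,
      genHarmonic_eq_zero_of_lt (by omega) (by omega)]
    simp
  match j with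
  | 0 => simp [genHarmonic, Finset.sum_range_succ]
  | k + 1 =>
    rw [genHarmonic, genHarmonic, Finset.sum_Icc_succ_top (by omega)]
    push_cast
    ring

lemma aCh_neg_one_right (M : ℕ) (i : ℤ) (x : ℝ) : aCh M i (-1) x = 0 := by
  match M with
  | 0 => rfl
  | 1 => simp [aCh]
  | _ + 2 => simp [aCh]

lemma aCh_zero_zero (M : ℕ) (x : ℝ) : aCh M 0 0 x = 0 := by
  match M with
  | 0 => rfl
  | 1 => simp [aCh]
  | _ + 2 => simp [aCh]

lemma aCh_zero_right_eq_zero_of_lt {M : ℕ} {i : ℤ} (h : (M : ℤ) < i) (x : ℝ) :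
    aCh M i 0 x = 0 := by
  match M with
  | 0 => rfl
  | 1 => rw [aCh, if_neg (by omega), if_neg (by omega)]
  | _ + 2 => rw [aCh, if_neg (by push_cast; omega)]

lemma aCh_add_two_zero (N i : ℕ) (x : ℝ) :
    aCh (N + 2) ((i : ℤ) + 1) 0 x
      = -(N + 1 : ℝ) * aCh (N + 1) ((i : ℤ) + 1) 0 x - (i + 1 : ℝ) * aCh (N + 1) i 0 x := by
  by_cases hi : i + 1 ≤ N + 2
  · rw [aCh, if_pos (by omega), add_sub_cancel_right, zero_sub, aCh_neg_one_right]
    push_cast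
    ring
  · rw [aCh_zero_right_eq_zero_of_lt (by push_cast; omega),
      aCh_zero_right_eq_zero_of_lt (by push_cast; omega),
      aCh_zero_right_eq_zero_of_lt (by push_cast; omega)]
    ring

lemma aCh_natCast_add_one_zero (N r : ℕ) (x : ℝ) :
    aCh (N + 1) ((r : ℤ) + 1) 0 x
      = (-1 : ℝ) ^ (N + 1) * (N ! : ℝ) * ((r + 1) ! : ℝ) * (genHarmonic N r : ℝ) := by
  induction N generalizing r with
  | zero =>
    match r with
    | 0 => simp [aCh]
    | k + 1 =>
      rw [aCh_zero_right_eq_zero_of_lt (by omega), genHarmonic_eq_zero_of_lt (by omega) (by omega)]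
      simp
  | succ N ih =>
    rw [aCh_add_two_zero, ih]
    match r with
    | 0 =>
      rw [Int.natCast_zero, aCh_zero_zero]
      simp only [genHarmonic_zero, Nat.factorial_succ]
      push_cast
      ring
    | k + 1 =>
      rw [Int.natCast_succ, ih, genHarmonic_succ_succ, Nat.factorial_succ N,
        Nat.factorial_succ (k + 1)]
      push_cast
      field_simp
      ring

theorem aCh_r_zero_general (N r : ℕ) (hr1 : 2 ≤ r) (x : ℝ) :
    aCh (N + 1) (r : ℤ) 0 x
      = (-1 : ℝ) ^ (N + 1) * (Nat.factorial N : ℝ) * (Nat.factorial r : ℝ) *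
          (genHarmonic N (r - 1) : ℝ) := by
  obtain ⟨k, rfl⟩ : ∃ k, r = k + 1 := ⟨r - 1, by omega⟩
  simpa using aCh_natCast_add_one_zero N k x

/-- For `2 ≤ r ≤ N`, `a_{r,0}(N+1,x) = (-1)^{N+1} · N! · r! · H_{N,r-1}`. -/
theorem aCh_r_zero (N r : ℕ) (hr1 : 2 ≤ r) (hr2 : r ≤ N) (x : ℝ) :
    aCh (N + 1) (r : ℤ) 0 x
      = (-1 : ℝ) ^ (N + 1) * (Nat.factorial N : ℝ) * (Nat.factorial r : ℝ) *
          (genHarmonic N (r - 1) : ℝ) :=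
  aCh_r_zero_general N r hr1 x
end
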